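/- arXiv:1603.06420 — 5 statements merged into one kernel-verified Lean document; each statement's English description precedes it below -/
import Mathlib

section
/- The monic Padé denominator polynomial P_r(z) = Σ_{k=0}^{r} (2r−k)!/(k!(r−k)!) · (−z)^k satisfies e^{−z} − P_r(z)/P_r(−z) = O(z^{2r+1}) as z → 0; that is, the Taylor expansions of e^{−z}·P_r(−z) and P_r(z) at z = 0 agree up to and including order 2r. -/
/-!
Write `Q(z) = P_r(-z) = ∑ q_m z^m`. By Leibniz' rule the `j`-th derivative of `e^{-z} Q(z)` at `0`
is `∑ᵢ (-1)^i (j choose i) (j-i)! q_{j-i}`, while that of `Q(-z)` is `(-1)^j j! q_j`.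
Since `m! q_m = r! (2r-m choose r)` for `m ≤ 2r`, the two agree once
`∑ᵢ (-1)^(j-i) (j choose i) (2r-j+i choose r) = (2r-j choose r)`. The left side is the `j`-th
forward difference of `x ↦ (x choose r)` at `2r-j`; as `Δ (x choose k+1) = (x choose k)`, it is
`(2r-j choose r-j)` for `j ≤ r` and `0` for `j > r`, which is `(2r-j choose r)` in both cases.
-/

open scoped BigOperators

/-- The (monic) Padé denominator polynomial for `e^{-z}`. -/
noncomputable def padeP (r : ℕ) (z : ℂ) : ℂ :=
  ∑ k ∈ Finset.range (r + 1),
    ((Nat.factorial (2 * r - k) : ℂ) / ((Nat.factorial k : ℂ) * (Nat.factorial (r - k) : ℂ)))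
      * (-z) ^ k

open Finset Polynomial Nat fwdDiff

theorem fwdDiff_iter_choose_apply (r j y : ℕ) :
    Δ_[1] ^[j] (fun x ↦ x.choose r : ℕ → ℤ) y = if j ≤ r then (y.choose (r - j) : ℤ) else 0 := by
  split_ifs with hjr
  · obtain ⟨k, rfl⟩ := Nat.exists_eq_add_of_le hjr
    rw [fwdDiff_iter_choose, Nat.add_sub_cancel_left]
  · obtain ⟨k, rfl⟩ := Nat.exists_eq_add_of_lt (not_le.mp hjr)
    have h_one : Δ_[1] ^[r] (fun x ↦ x.choose r : ℕ → ℤ) = fun _ ↦ 1 := by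
      simpa using fwdDiff_iter_choose 0 r
    rw [show r + k + 1 = k + 1 + r by omega, Function.iterate_add_apply, h_one,
      Function.iterate_succ_apply, fwdDiff_const]
    exact congrFun (Function.iterate_fixed (fwdDiff_const 1 0) k) y

theorem fwdDiff_iter_choose_apply_two_mul_sub (r j : ℕ) (hj : j ≤ 2 * r) :
    Δ_[1] ^[j] (fun x ↦ x.choose r : ℕ → ℤ) (2 * r - j) = (2 * r - j).choose r := by
  rw [fwdDiff_iter_choose_apply]
  split_ifs with hjr
  · rw [Nat.choose_symm_of_eq_add (b := r) (by omega)]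
  · rw [Nat.choose_eq_zero_of_lt (by omega), Nat.cast_zero]

theorem neg_one_pow_mul_neg_one_pow_sub {R : Type*} [Monoid R] [HasDistribNeg R] {i j : ℕ}
    (hij : i ≤ j) : (-1 : R) ^ j * (-1) ^ (j - i) = (-1) ^ i := by
  obtain ⟨m, rfl⟩ := Nat.exists_eq_add_of_le hij
  rw [Nat.add_sub_cancel_left, pow_add, mul_assoc, ← pow_add, Even.neg_one_pow ⟨m, rfl⟩, mul_one]

theorem sum_neg_one_pow_mul_choose_mul_choose (r j : ℕ) (hj : j ≤ 2 * r) :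
    ∑ i ∈ range (j + 1), (-1 : ℤ) ^ i * j.choose i * (2 * r - j + i).choose r =
      (-1) ^ j * (2 * r - j).choose r := by
  rw [← fwdDiff_iter_choose_apply_two_mul_sub r j hj, fwdDiff_iter_eq_sum_shift, mul_sum]
  refine sum_congr rfl fun i hi ↦ ?_
  rw [smul_eq_mul, smul_eq_mul, mul_one, ← mul_assoc, ← mul_assoc,
    neg_one_pow_mul_neg_one_pow_sub (Nat.lt_succ_iff.mp (mem_range.mp hi))]

section IteratedDeriv

variable {𝕜 : Type*} [NontriviallyNormedField 𝕜]

@[fun_prop]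
theorem Polynomial.contDiff_eval (p : 𝕜[X]) (n : WithTop ℕ∞) : ContDiff 𝕜 n fun x ↦ p.eval x :=
  p.contDiff_aeval n

theorem Polynomial.iteratedDeriv_eval (p : 𝕜[X]) (n : ℕ) :
    iteratedDeriv n (fun x ↦ p.eval x) = fun x ↦ (derivative^[n] p).eval x := by
  induction n with
  | zero => simp
  | succ n ih =>
    ext x
    rw [iteratedDeriv_succ, ih, Polynomial.deriv, Function.iterate_succ_apply']

theorem Polynomial.iteratedDeriv_eval_zero (p : 𝕜[X]) (n : ℕ) :
    iteratedDeriv n (fun x ↦ p.eval x) 0 = n ! * p.coeff n := by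
  simp only [iteratedDeriv_eval]
  rw [← coeff_zero_eq_eval_zero, coeff_iterate_derivative, zero_add, descFactorial_self,
    nsmul_eq_mul]

end IteratedDeriv

theorem iteratedDeriv_cexp_neg_mul_eval_zero (p : ℂ[X]) (n : ℕ) :
    iteratedDeriv n (fun z ↦ Complex.exp (-z) * p.eval z) 0 =
      ∑ i ∈ range (n + 1), (-1) ^ i * n.choose i * ((n - i)! * p.coeff (n - i)) := by
  rw [iteratedDeriv_fun_mul (by fun_prop) (by fun_prop)]
  refine sum_congr rfl fun i _ ↦ ?_
  have h_exp := iteratedDeriv_cexp_const_mul i (-1)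
  simp only [neg_one_mul] at h_exp
  rw [h_exp, iteratedDeriv_eval_zero]
  simp only [neg_zero, Complex.exp_zero, mul_one]
  ring

theorem iteratedDeriv_eval_neg_zero (p : ℂ[X]) (n : ℕ) :
    iteratedDeriv n (fun z ↦ p.eval (-z)) 0 = (-1) ^ n * (n ! * p.coeff n) := by
  rw [iteratedDeriv_comp_neg n (fun z ↦ p.eval z), neg_zero, iteratedDeriv_eval_zero, smul_eq_mul]

noncomputable def padePoly (r : ℕ) : ℂ[X] :=
  ∑ k ∈ range (r + 1), C ((2 * r - k)! / (k ! * (r - k)!) : ℂ) * X ^ k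

theorem padePoly_eval (r : ℕ) (z : ℂ) : (padePoly r).eval z = padeP r (-z) := by
  simp [padePoly, padeP, eval_finsetSum]

theorem factorial_mul_coeff_padePoly (r m : ℕ) (hm : m ≤ 2 * r) :
    (m ! : ℂ) * (padePoly r).coeff m = r ! * (2 * r - m).choose r := by
  simp only [padePoly, finsetSum_coeff, coeff_C_mul_X_pow, sum_ite_eq, mem_range]
  split_ifs with hmr
  · have h := Nat.choose_mul_factorial_mul_factorial (show r ≤ 2 * r - m by omega)
    rw [show 2 * r - m - r = r - m by omega] at h
    rw [← h]
    push_cast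
    have := m.factorial_ne_zero
    have := (r - m).factorial_ne_zero
    field_simp
  · rw [Nat.choose_eq_zero_of_lt (by omega)]
    simp

theorem sum_neg_one_pow_mul_choose_mul_coeff_padePoly (r j : ℕ) (hj : j ≤ 2 * r) :
    ∑ i ∈ range (j + 1), (-1) ^ i * j.choose i * ((j - i)! * (padePoly r).coeff (j - i)) =
      (-1) ^ j * (j ! * (padePoly r).coeff j) := by
  calc ∑ i ∈ range (j + 1), (-1) ^ i * j.choose i * ((j - i)! * (padePoly r).coeff (j - i))
      = r ! * ∑ i ∈ range (j + 1), ((-1 : ℤ) ^ i * j.choose i * (2 * r - j + i).choose r : ℤ) := by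
        push_cast
        rw [mul_sum]
        refine sum_congr rfl fun i hi ↦ ?_
        rw [factorial_mul_coeff_padePoly r _ (by omega),
          show 2 * r - (j - i) = 2 * r - j + i by have := mem_range.mp hi; omega]
        ring
    _ = (-1) ^ j * (j ! * (padePoly r).coeff j) := by
        rw [sum_neg_one_pow_mul_choose_mul_choose r j hj, factorial_mul_coeff_padePoly r j hj]
        push_cast
        ring

/-- `e^{-z} - P_r(z)/P_r(-z) = O(z^{2r+1})` as `z → 0`: the Taylor expansions of
`e^{-z} P_r(-z)` and `P_r(z)` at `0` agree up to and including order `2r`. -/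
theorem pade_exp_contact (r : ℕ) (j : ℕ) (hj : j ≤ 2 * r) :
    iteratedDeriv j (fun z : ℂ => Complex.exp (-z) * padeP r (-z) - padeP r z) 0 = 0 := by
  have h_poly : (fun z : ℂ => Complex.exp (-z) * padeP r (-z) - padeP r z) =
      fun z ↦ Complex.exp (-z) * (padePoly r).eval z - (padePoly r).eval (-z) := by
    simp only [padePoly_eval, neg_neg]
  rw [h_poly, iteratedDeriv_fun_sub (by fun_prop) (by fun_prop),
    iteratedDeriv_cexp_neg_mul_eval_zero, iteratedDeriv_eval_neg_zero, sub_eq_zero]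
  exact sum_neg_one_pow_mul_choose_mul_coeff_padePoly r j hj
end

section
/- The remainder of the diagonal Padé approximation to the exponential admits the integral representation e^{−z} − P_r(z)/P_r(−z) = ((−1)^{r+1} z^{2r+1})/(r! P_r(−z)) · ∫₀¹ e^{−tz} (1−t)^r t^r dt, valid for all z with P_r(−z) ≠ 0. -/
open scoped BigOperators

/-! Let `f(t) = (1 - t)^r t^r`, of degree `2r`. The polynomial `G = ∑_{k ≤ 2r} z^k f^{(2r-k)}`
satisfies `z G - G' = z^{2r+1} f`, so `-e^{-tz} G(t)` is an antiderivative of `z^{2r+1} e^{-tz} f(t)`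
and `z^{2r+1} ∫₀¹ e^{-tz} f = G(0) - e^{-z} G(1)`. Reading `G(0)` off the coefficients of `f` gives
`(-1)^r r! P_r(z)`, and the symmetry `f(1 - t) = f(t)` turns `G(1)` into `(-1)^r r! P_r(-z)`. -/

open Polynomial Finset
open scoped Nat

theorem neg_one_pow_sub_of_le {R : Type*} [Monoid R] [HasDistribNeg R] {k n : ℕ} (h : k ≤ n) :
    (-1 : R) ^ (n - k) = (-1) ^ n * (-1) ^ k := by
  conv_rhs => rw [← Nat.sub_add_cancel h, pow_add, mul_assoc, ← pow_add, ← two_mul, pow_mul]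
  simp

namespace Polynomial

variable {R : Type*} [CommRing R]

theorem coeff_one_sub_X_pow (n k : ℕ) :
    ((1 - X : R[X]) ^ n).coeff k = (-1) ^ k * n.choose k := by
  have : (1 - X : R[X]) ^ n = C ((-1) ^ n) * (X + C (-1)) ^ n := by
    rw [C_pow, ← mul_pow]; congr 1; simp; ring
  rw [this, coeff_C_mul, coeff_X_add_C_pow]
  rcases le_or_gt k n with h | h
  · rw [neg_one_pow_sub_of_le h, ← mul_assoc, ← mul_assoc, ← pow_add, ← two_mul, pow_mul]
    simp
  · simp [Nat.choose_eq_zero_of_lt h]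

noncomputable def expAntideriv (p : R[X]) (n : ℕ) (z : R) : R[X] :=
  ∑ k ∈ range (n + 1), C (z ^ k) * derivative^[n - k] p

theorem C_mul_expAntideriv_sub_derivative {p : R[X]} {n : ℕ} (hp : p.natDegree ≤ n) (z : R) :
    C z * expAntideriv p n z - derivative (expAntideriv p n z) = C (z ^ (n + 1)) * p := by
  set a : ℕ → R[X] := fun k ↦ C (z ^ k) * derivative^[n + 1 - k] p
  have htelescope : ∀ k ∈ range (n + 1),
      C z * (C (z ^ k) * derivative^[n - k] p) - derivative (C (z ^ k) * derivative^[n - k] p)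
        = a (k + 1) - a k := by
    intro k hk
    simp only [a, Nat.add_sub_add_right, Nat.sub_add_comm (Nat.le_of_lt_succ (mem_range.mp hk)),
      Function.iterate_succ_apply', derivative_C_mul, pow_succ, C_mul]
    ring
  have hvanish : derivative^[n + 1] p = 0 := iterate_derivative_eq_zero (Nat.lt_succ_of_le hp)
  rw [expAntideriv, mul_sum, derivative_sum, ← sum_sub_distrib, sum_congr rfl htelescope,
    sum_range_sub]
  simp [a, hvanish]

theorem eval_zero_expAntideriv (p : R[X]) (n : ℕ) (z : R) :
    (expAntideriv p n z).eval 0 = ∑ k ∈ range (n + 1), z ^ k * (n - k)! * p.coeff (n - k) := by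
  simp [expAntideriv, eval_finsetSum, ← coeff_zero_eq_eval_zero, coeff_iterate_derivative,
    Nat.descFactorial_self, mul_assoc]

theorem eval_one_expAntideriv_of_comp_one_sub_X {p : R[X]} (hp : p.comp (1 - X) = p) (n : ℕ)
    (z : R) : (expAntideriv p n z).eval 1 = (-1) ^ n * (expAntideriv p n (-z)).eval 0 := by
  have hD : ∀ j, (derivative^[j] p).eval 1 = (-1) ^ j * (derivative^[j] p).eval 0 := by
    intro j
    conv_lhs => rw [← hp, iterate_derivative_comp_one_sub_X]
    simp [eval_comp]
  simp only [expAntideriv, eval_finsetSum, eval_mul, eval_C, hD, mul_sum]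
  refine sum_congr rfl fun k hk ↦ ?_
  rw [neg_one_pow_sub_of_le (Nat.le_of_lt_succ (mem_range.mp hk)), neg_pow]
  ring

theorem pow_succ_mul_integral_exp_mul_eval {p : ℂ[X]} {n : ℕ} (hp : p.natDegree ≤ n) (z : ℂ)
    (a b : ℝ) :
    z ^ (n + 1) * ∫ t in a..b, Complex.exp (-(t : ℂ) * z) * p.eval (t : ℂ)
      = Complex.exp (-(a : ℂ) * z) * (expAntideriv p n z).eval (a : ℂ)
        - Complex.exp (-(b : ℂ) * z) * (expAntideriv p n z).eval (b : ℂ) := by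
  set G := expAntideriv p n z
  have hderiv : ∀ t : ℝ, HasDerivAt (fun s : ℝ ↦ -(Complex.exp (-(s : ℂ) * z) * G.eval (s : ℂ)))
      (z ^ (n + 1) * (Complex.exp (-(t : ℂ) * z) * p.eval (t : ℂ))) t := by
    intro t
    have hexp : HasDerivAt (fun x : ℂ ↦ Complex.exp (-x * z)) (Complex.exp (-(t : ℂ) * z) * -z) t :=
      (Complex.hasDerivAt_exp _).comp _ (by simpa using ((hasDerivAt_id (t : ℂ)).neg.mul_const z))
    have hG : z ^ (n + 1) * p.eval (t : ℂ) = z * G.eval (t : ℂ) - (derivative G).eval (t : ℂ) := by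
      simpa using congrArg (eval (t : ℂ)) (C_mul_expAntideriv_sub_derivative hp z).symm
    refine ((hexp.mul (G.hasDerivAt _)).neg.comp_ofReal).congr_deriv ?_
    linear_combination -Complex.exp (-(t : ℂ) * z) * hG
  rw [← intervalIntegral.integral_const_mul,
    intervalIntegral.integral_eq_sub_of_hasDerivAt (fun t _ ↦ hderiv t)
      (by apply Continuous.intervalIntegrable; fun_prop)]
  ring

end Polynomial

theorem eval_zero_expAntideriv_one_sub_X_pow_mul_X_pow (r : ℕ) (z : ℂ) :
    (expAntideriv ((1 - X) ^ r * X ^ r) (2 * r) z).eval 0 = (-1) ^ r * r ! * padeP r z := by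
  rw [eval_zero_expAntideriv, padeP, mul_sum]
  refine (sum_subset (range_subset_range.2 (by omega)) fun k hk hk' ↦ ?_).symm.trans
    (sum_congr rfl fun k hk ↦ ?_)
  · simp only [mem_range] at hk hk'
    rw [coeff_mul_X_pow', if_neg (by omega), mul_zero]
  · have hkr : k ≤ r := Nat.le_of_lt_succ (mem_range.mp hk)
    rw [coeff_mul_X_pow', if_pos (by omega), coeff_one_sub_X_pow,
      show 2 * r - k - r = r - k by omega, Nat.choose_symm hkr, Nat.cast_choose ℂ hkr,
      neg_one_pow_sub_of_le hkr, neg_pow, show 2 * r - k = r + (r - k) by omega]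
    field_simp
    ring

theorem pow_mul_integral_exp_mul_one_sub_pow_mul_pow (r : ℕ) (z : ℂ) :
    z ^ (2 * r + 1) * ∫ t in (0:ℝ)..1, Complex.exp (-(t : ℂ) * z) * (1 - (t : ℂ)) ^ r * (t : ℂ) ^ r
      = (-1) ^ r * r ! * (padeP r z - Complex.exp (-z) * padeP r (-z)) := by
  have hdeg : ((1 - X : ℂ[X]) ^ r * X ^ r).natDegree ≤ 2 * r := by compute_degree; omega
  have hsymm : ((1 - X : ℂ[X]) ^ r * X ^ r).comp (1 - X) = (1 - X) ^ r * X ^ r := by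
    simp only [mul_comp, pow_comp, sub_comp, one_comp, X_comp, sub_sub_cancel, mul_comm]
  have h := pow_succ_mul_integral_exp_mul_eval hdeg z 0 1
  rw [Complex.ofReal_zero, Complex.ofReal_one, eval_one_expAntideriv_of_comp_one_sub_X hsymm,
    pow_mul, neg_one_sq, one_pow, eval_zero_expAntideriv_one_sub_X_pow_mul_X_pow,
    eval_zero_expAntideriv_one_sub_X_pow_mul_X_pow] at h
  simp only [eval_mul, eval_pow, eval_sub, eval_one, eval_X, ← mul_assoc, neg_zero, zero_mul,
    Complex.exp_zero, one_mul, neg_one_mul] at h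
  rw [h]
  ring

/-- The integral representation of the remainder of the diagonal Padé approximation:
`e^{−z} − P_r(z)/P_r(−z) = ((−1)^{r+1} z^{2r+1})/(r! P_r(−z)) ∫₀¹ e^{−tz}(1−t)^r t^r dt`
whenever `P_r(−z) ≠ 0`. -/
theorem pade_exp_remainder (r : ℕ) (z : ℂ) (h : padeP r (-z) ≠ 0) :
    Complex.exp (-z) - padeP r z / padeP r (-z)
      = ((-1 : ℂ) ^ (r + 1) * z ^ (2 * r + 1)) / ((Nat.factorial r : ℂ) * padeP r (-z))
        * ∫ t in (0:ℝ)..1, Complex.exp (-(t : ℂ) * z) * ((1 : ℂ) - (t : ℂ)) ^ r * (t : ℂ) ^ r := by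
  have hsign : (-1 : ℂ) ^ (r + 1) * (-1) ^ r = -1 := by
    rw [← pow_add, show r + 1 + r = 2 * r + 1 by omega, pow_succ, pow_mul]; simp
  have hfact : (r ! : ℂ) ≠ 0 := Nat.cast_ne_zero.2 r.factorial_ne_zero
  have hrem := pow_mul_integral_exp_mul_one_sub_pow_mul_pow r z
  -- keeps `field_simp` from rewriting the integrand of the goal but not that of `hrem`
  set I := ∫ t in (0:ℝ)..1, Complex.exp (-(t : ℂ) * z) * ((1 : ℂ) - (t : ℂ)) ^ r * (t : ℂ) ^ r
  field_simp
  linear_combination -(-1 : ℂ) ^ (r + 1) * hrem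
    - (r ! * (padeP r z - Complex.exp (-z) * padeP r (-z))) * hsign
end

section
/- The normalizing Gaussian matrix integral over n×n Hermitian matrices evaluates to ∫_{H_n} dM e^{−Tr(Y M²)} = π^{n²/2} / (∏_{j=1}^n √{y_j} · ∏_{j<k} (y_j + y_k)), where Y = diag(y_1,…,y_n) with Re y_j > 0 and dM is Lebesgue measure on the real and imaginary parts of the entries. -/
/-!
In the coordinates of `hermOf`, `Tr (Y M²) = ∑ᵢⱼ yᵢ Mᵢⱼ Mⱼᵢ = ∑ᵢ yᵢ xᵢ² + ∑_{i<j} (yᵢ + yⱼ) |zᵢⱼ|²`,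
so the integrand is a product of `n` real Gaussians, `∫ e^{-y t²} dt = (π / y)^{1/2}`, and of
one Gaussian on `ℂ ≅ ℝ²` for each pair `i < j`, `∫ e^{-c |z|²} dz = π / c`. Since
`n + 2 · #{i < j} = n²`, the powers of `π` collect to `π^{n²/2}`.
-/

open MeasureTheory
open scoped BigOperators

/-- Parametrization of `n×n` Hermitian matrices by the diagonal (real) entries and the
strictly-upper-triangular (complex) entries. -/
noncomputable def hermOf (n : ℕ)
    (x : (Fin n → ℝ) × ({ p : Fin n × Fin n // p.1 < p.2 } → ℂ)) :
    Matrix (Fin n) (Fin n) ℂ :=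
  Matrix.of fun i j =>
    if h : i < j then x.2 ⟨(i, j), h⟩
    else if h' : j < i then (starRingEnd ℂ) (x.2 ⟨(j, i), h'⟩)
    else ((x.1 i : ℝ) : ℂ)

open Complex Real

theorem Fintype.sum_prod_self_eq_sum_diag_add_sum_lt {ι M : Type*} [Fintype ι] [LinearOrder ι]
    [AddCommMonoid M] (f : ι × ι → M) :
    ∑ p, f p = ∑ i, f (i, i) + ∑ p : {p : ι × ι // p.1 < p.2}, (f p + f p.1.swap) := by
  -- `f p.swap.swap` makes the reindexing by `Equiv.prodComm` in `hswap` hold by `rfl`.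
  have hsplit : ∀ p : ι × ι, f p = (if p.1 = p.2 then f p else 0) +
      ((if p.1 < p.2 then f p else 0) + (if p.2 < p.1 then f p.swap.swap else 0)) := by
    rintro ⟨i, j⟩
    rcases lt_trichotomy i j with h | rfl | h
    · simp [h, h.ne, h.not_gt]
    · simp
    · simp [h, h.ne', h.not_gt]
  have hswap : ∑ p : ι × ι, (if p.2 < p.1 then f p.swap.swap else 0) =
      ∑ p : ι × ι, (if p.1 < p.2 then f p.swap else 0) :=
    Fintype.sum_equiv (Equiv.prodComm ι ι) _ _ fun _ => rfl
  rw [Fintype.sum_congr _ _ hsplit, Finset.sum_add_distrib, Finset.sum_add_distrib, hswap,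
    ← Finset.sum_add_distrib, Fintype.sum_prod_type]
  simp only [Finset.sum_ite_eq, Finset.mem_univ, if_true, ite_add_ite, add_zero,
    ← Finset.sum_filter]
  exact congrArg _ (Finset.sum_subtype _ (fun _ => by simp) _)

theorem Fintype.card_mul_self_eq_card_add_two_mul_card_lt (ι : Type*) [Fintype ι]
    [LinearOrder ι] :
    card ι * card ι = card ι + 2 * card {p : ι × ι // p.1 < p.2} := by
  have h := Fintype.sum_prod_self_eq_sum_diag_add_sum_lt (fun _ : ι × ι => 1)
  simp only [Finset.sum_const, Finset.card_univ, card_prod, smul_eq_mul, mul_one] at h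
  lia

theorem Matrix.trace_diagonal_mul_sq {ι R : Type*} [Fintype ι] [DecidableEq ι] [Semiring R]
    (d : ι → R) (M : Matrix ι ι R) :
    (diagonal d * M ^ 2).trace = ∑ p : ι × ι, d p.1 * (M p.1 p.2 * M p.2 p.1) := by
  simp only [trace, diag_apply, diagonal_mul]
  simp only [sq, mul_apply, Finset.mul_sum, Fintype.sum_prod_type]

theorem trace_diagonal_mul_hermOf_sq (n : ℕ) (y : Fin n → ℂ)
    (x : (Fin n → ℝ) × ({ p : Fin n × Fin n // p.1 < p.2 } → ℂ)) :
    (Matrix.diagonal y * hermOf n x ^ 2).trace =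
      ∑ i, y i * (x.1 i : ℂ) ^ 2 + ∑ p, (y p.1.1 + y p.1.2) * (‖x.2 p‖ : ℂ) ^ 2 := by
  rw [Matrix.trace_diagonal_mul_sq, Fintype.sum_prod_self_eq_sum_diag_add_sum_lt]
  congr 1
  · simp [hermOf, sq]
  · refine Fintype.sum_congr _ _ fun ⟨⟨i, j⟩, hij⟩ => ?_
    simp only [hermOf, Matrix.of_apply, Prod.swap, hij, hij.not_gt, dif_pos, dif_neg,
      not_false_eq_true]
    rw [← mul_conj']
    ring

theorem Complex.ofReal_mul_cpow {a : ℝ} (ha : 0 ≤ a) (z s : ℂ) :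
    ((a : ℂ) * z) ^ s = (a : ℂ) ^ s * z ^ s := by
  rcases ha.eq_or_lt with rfl | ha
  · by_cases hs : s = 0 <;> simp [hs, zero_cpow]
  by_cases hz : z = 0
  · by_cases hs : s = 0 <;> simp [hz, hs, zero_cpow]
  have ha' : (a : ℂ) ≠ 0 := ofReal_ne_zero.2 ha.ne'
  rw [cpow_def_of_ne_zero (mul_ne_zero ha' hz), cpow_def_of_ne_zero ha', cpow_def_of_ne_zero hz,
    log_ofReal_mul ha hz, ofReal_log ha.le, add_mul, exp_add]

theorem Complex.ofReal_div_cpow {a : ℝ} (ha : 0 ≤ a) {z : ℂ} (hz : z.arg ≠ π) (s : ℂ) :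
    ((a : ℂ) / z) ^ s = (a : ℂ) ^ s / z ^ s := by
  rw [div_eq_mul_inv, ofReal_mul_cpow ha, inv_cpow _ _ hz, div_eq_mul_inv]

theorem Complex.cpow_natCast_add_two_mul_div_two {x : ℂ} (hx : x ≠ 0) (m k : ℕ) :
    x ^ (((m + 2 * k : ℕ) : ℂ) / 2) = (x ^ (1 / 2 : ℂ)) ^ m * x ^ k := by
  have hexp : ((m + 2 * k : ℕ) : ℂ) / 2 = m * (1 / 2) + k := by push_cast; ring
  rw [hexp, cpow_add _ _ hx, cpow_nat_mul, cpow_natCast]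

theorem integral_cexp_neg_sum_mul_sq_add_sum_mul_norm_sq {ι κ : Type*} [Fintype ι] [Fintype κ]
    {a : ι → ℂ} {b : κ → ℂ} (ha : ∀ i, 0 < (a i).re) (hb : ∀ k, 0 < (b k).re) :
    ∫ x : (ι → ℝ) × (κ → ℂ),
        cexp (-(∑ i, a i * (x.1 i : ℂ) ^ 2 + ∑ k, b k * (‖x.2 k‖ : ℂ) ^ 2)) =
      (∏ i, (π / a i) ^ (1 / 2 : ℂ)) * ∏ k, π / b k := by
  simp_rw [neg_add, Complex.exp_add, ← Finset.sum_neg_distrib, Complex.exp_sum, ← neg_mul]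
  rw [Measure.volume_eq_prod,
    integral_prod_mul (fun u : ι → ℝ => ∏ i, cexp (-a i * (u i : ℂ) ^ 2))
      (fun v : κ → ℂ => ∏ k, cexp (-b k * (‖v k‖ : ℂ) ^ 2)),
    integral_fintype_prod_volume_eq_prod fun i (t : ℝ) => cexp (-a i * (t : ℂ) ^ 2),
    integral_fintype_prod_volume_eq_prod fun k (z : ℂ) => cexp (-b k * (‖z‖ : ℂ) ^ 2)]
  simp_rw [integral_gaussian_complex (ha _), GaussianFourier.integral_cexp_neg_mul_sq_norm (hb _)]
  simp

/-- The Gaussian matrix integral over `n×n` Hermitian matrices: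
`∫_{H_n} dM e^{−Tr(Y M²)} = π^{n²/2} / (∏ √y_j ∏_{j<k}(y_j + y_k))`,
for `Y = diag(y_1,…,y_n)` with `Re y_j > 0`, where `dM` is the Lebesgue measure on the
real and imaginary parts of the entries. -/
theorem gaussian_hermitian_integral (n : ℕ) (y : Fin n → ℂ) (hy : ∀ j, 0 < (y j).re) :
    ∫ x : (Fin n → ℝ) × ({ p : Fin n × Fin n // p.1 < p.2 } → ℂ),
        Complex.exp (-(Matrix.trace (Matrix.diagonal y * hermOf n x ^ 2)))
      = (Real.pi : ℂ) ^ (((n ^ 2 : ℕ) : ℂ) / 2)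
        / ((∏ j, (y j) ^ ((1 : ℂ) / 2))
            * ∏ p ∈ Finset.univ.filter (fun p : Fin n × Fin n => p.1 < p.2),
                (y p.1 + y p.2)) := by
  have hcard := Fintype.card_mul_self_eq_card_add_two_mul_card_lt (Fin n)
  rw [Fintype.card_fin, ← sq] at hcard
  have harg : ∀ j, (y j).arg ≠ π := fun j => (arg_lt_pi_iff.2 (Or.inl (hy j).le)).ne
  simp_rw [trace_diagonal_mul_hermOf_sq]
  rw [integral_cexp_neg_sum_mul_sq_add_sum_mul_norm_sq hy fun p => add_pos (hy _) (hy _),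
    ← Finset.prod_subtype_eq_prod_filter, Finset.subtype_univ,
    hcard, cpow_natCast_add_two_mul_div_two (ofReal_ne_zero.2 pi_ne_zero)]
  simp_rw [ofReal_div_cpow pi_pos.le (harg _), Finset.prod_div_distrib, Finset.prod_const,
    Finset.card_univ, Fintype.card_fin, div_mul_div_comm]
end

section
/- Andreief's identity: for integrable functions f_1,…,f_n and g_1,…,g_n on a measure space (X, μ), ∫_{X^n} det[f_j(s_k)]_{j,k=1}^n · det[g_j(s_k)]_{j,k=1}^n ∏_{k=1}^n dμ(s_k) = n! · det[∫_X f_j(s) g_k(s) dμ(s)]_{j,k=1}^n. -/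
/-!
Expanding both determinants by the Leibniz formula writes the integrand as
`∑_{σ,τ} sgn σ sgn τ ∏_k f_{σ k}(s_k) g_{τ k}(s_k)`, and by Fubini each term integrates to
`sgn σ sgn τ ∏_k C_{σ k, τ k}` with `C_{jk} = ∫ f_j g_k dμ`. For fixed `σ` the sum over `τ` is the
Leibniz expansion of `det C` with rows permuted by `σ`, i.e. `sgn σ · det C`, so each of the `n!`
permutations `σ` contributes exactly `det C`.
-/

open MeasureTheory Equiv

namespace Matrix

variable {ι R : Type*} [Fintype ι] [DecidableEq ι] [CommRing R]

theorem det_mul_det_eq_sum_sum (A B : Matrix ι ι R) :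
    A.det * B.det = ∑ σ : Perm ι, ∑ τ : Perm ι,
      (Perm.sign σ : R) * (Perm.sign τ : R) * ∏ k, A (σ k) k * B (τ k) k := by
  rw [det_apply', det_apply', Finset.sum_mul_sum]
  refine Finset.sum_congr rfl fun σ _ => Finset.sum_congr rfl fun τ _ => ?_
  rw [Finset.prod_mul_distrib]
  ring

theorem sum_sign_mul_prod_perm_eq_det (C : Matrix ι ι R) (σ : Perm ι) :
    ∑ τ : Perm ι, (Perm.sign σ : R) * (Perm.sign τ : R) * ∏ k, C (σ k) (τ k) = C.det := by
  have hrows : ∑ τ : Perm ι, (Perm.sign τ : R) * ∏ k, C (σ k) (τ k)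
      = (Perm.sign σ : R) * C.det := by
    rw [← det_permute σ C, ← det_transpose, det_apply']
    rfl
  have hsq : (Perm.sign σ : R) * (Perm.sign σ : R) = 1 := by
    rw [← Int.cast_mul, ← Units.val_mul, Int.units_mul_self, Units.val_one, Int.cast_one]
  simp_rw [mul_assoc, ← Finset.mul_sum, hrows, ← mul_assoc, hsq, one_mul]

theorem sum_sum_sign_mul_prod_perm (C : Matrix ι ι R) :
    ∑ σ : Perm ι, ∑ τ : Perm ι, (Perm.sign σ : R) * (Perm.sign τ : R) * ∏ k, C (σ k) (τ k)
      = (Fintype.card ι).factorial * C.det := by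
  simp_rw [sum_sign_mul_prod_perm_eq_det, Finset.sum_const, Finset.card_univ, Fintype.card_perm,
    nsmul_eq_mul]

end Matrix

theorem integral_det_mul_det {ι 𝕜 X : Type*} [Fintype ι] [DecidableEq ι] [RCLike 𝕜]
    [MeasurableSpace X] (μ : Measure X) [SigmaFinite μ] (f g : ι → X → 𝕜)
    (hint : ∀ j k, Integrable (fun x => f j x * g k x) μ) :
    ∫ s : ι → X, (Matrix.of fun j k => f j (s k)).det * (Matrix.of fun j k => g j (s k)).det
        ∂(Measure.pi fun _ => μ)
      = (Fintype.card ι).factorial * (Matrix.of fun j k => ∫ x, f j x * g k x ∂μ).det := by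
  have hint_prod (σ τ : Perm ι) : Integrable (fun s : ι → X => ∏ k, f (σ k) (s k) * g (τ k) (s k))
      (Measure.pi fun _ => μ) :=
    Integrable.fintype_prod fun k => hint (σ k) (τ k)
  simp_rw [Matrix.det_mul_det_eq_sum_sum, Matrix.of_apply]
  rw [← Matrix.sum_sum_sign_mul_prod_perm,
    integral_finsetSum _ fun σ _ => integrable_finsetSum _ fun τ _ => (hint_prod σ τ).const_mul _]
  refine Finset.sum_congr rfl fun σ _ => ?_
  rw [integral_finsetSum _ fun τ _ => (hint_prod σ τ).const_mul _]
  refine Finset.sum_congr rfl fun τ _ => ?_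
  rw [integral_const_mul, integral_fintype_prod_eq_prod (fun k x => f (σ k) x * g (τ k) x)]
  simp only [Matrix.of_apply]

theorem andreief_identity_general {X : Type*} [MeasurableSpace X] (μ : Measure X) [SigmaFinite μ]
    (n : ℕ) (f g : Fin n → X → ℂ)
    (hint : ∀ j k, Integrable (fun x => f j x * g k x) μ) :
    ∫ s : Fin n → X,
        (Matrix.det (Matrix.of fun j k : Fin n => f j (s k)))
          * (Matrix.det (Matrix.of fun j k : Fin n => g j (s k)))
        ∂(Measure.pi fun _ : Fin n => μ)
      = (Nat.factorial n : ℂ)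
        * Matrix.det (Matrix.of fun j k : Fin n => ∫ x, f j x * g k x ∂μ) := by
  simpa using integral_det_mul_det μ f g hint

/-- Andreief's identity: for measurable functions `f_1,…,f_n`, `g_1,…,g_n` on a measure
space `(X, μ)` with each product `f_j g_k` integrable,
`∫_{X^n} det[f_j(s_k)] det[g_j(s_k)] ∏ dμ(s_k) = n! det[∫ f_j g_k dμ]`. -/
theorem andreief_identity {X : Type*} [MeasurableSpace X] (μ : Measure X) [SigmaFinite μ]
    (n : ℕ) (f g : Fin n → X → ℂ)
    (hf : ∀ j, Measurable (f j)) (hg : ∀ j, Measurable (g j))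
    (hint : ∀ j k, Integrable (fun x => f j x * g k x) μ) :
    ∫ s : Fin n → X,
        (Matrix.det (Matrix.of fun j k : Fin n => f j (s k)))
          * (Matrix.det (Matrix.of fun j k : Fin n => g j (s k)))
        ∂(Measure.pi fun _ : Fin n => μ)
      = (Nat.factorial n : ℂ)
        * Matrix.det (Matrix.of fun j k : Fin n => ∫ x, f j x * g k x ∂μ) :=
  andreief_identity_general μ n f g hint
end

section
/- In the block-determinant formula, repeated use of the Airy differential equation f'' = (λ + x)f allows reduction of columns: if f_1,…,f_n all satisfy f_k''(λ) = λ f_k(λ), then for any points z_1,…,z_n the n×n matrix with columns [f_k(z_k)], [f_k'(z_k)], [z_k f_k(z_k)], [z_k f_k'(z_k)], [z_k² f_k(z_k)], … (rows indexed by k) has, up to elementary column operations, the same determinant as the Wronskian-type matrix [f_k^{(j−1)}(z_k)]_{k,j=1}^n. -/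
/-!
Using `f'' = z f`, every derivative of a solution is `f⁽ʲ⁾ = p_j(z) f + q_j(z) f'` for
polynomials `p_j, q_j` that do not depend on the solution. Interleaving their coefficients
writes `f⁽ʲ⁾(z)` as a combination of the entries `z^m f(z)`, `z^m f'(z)` of the reduced matrix
in which column `j` has coefficient `1` and every later column coefficient `0`. Hence the
Wronskian-type matrix is the reduced one times an upper unitriangular matrix, and the
determinants agree.
-/

open Polynomial Finset

theorem Finset.sum_range_two_mul {M : Type*} [AddCommMonoid M] (N : ℕ) (g : ℕ → M) :
    ∑ i ∈ range (2 * N), g i =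
      ∑ m ∈ range N, g (2 * m) + ∑ m ∈ range N, g (2 * m + 1) := by
  induction N with
  | zero => simp
  | succ N ih =>
    rw [show 2 * (N + 1) = 2 * N + 1 + 1 by ring, sum_range_succ, sum_range_succ, ih,
      sum_range_succ, sum_range_succ]
    abel

section Interleave

variable {R : Type*} [CommSemiring R]

/-- The coefficients of `p(X²) + X q(X²)`. -/
def interleavedCoeff (p q : R[X]) (i : ℕ) : R :=
  if i % 2 = 0 then p.coeff (i / 2) else q.coeff (i / 2)

@[simp]
theorem interleavedCoeff_two_mul (p q : R[X]) (m : ℕ) :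
    interleavedCoeff p q (2 * m) = p.coeff m := by
  simp [interleavedCoeff]

@[simp]
theorem interleavedCoeff_two_mul_add_one (p q : R[X]) (m : ℕ) :
    interleavedCoeff p q (2 * m + 1) = q.coeff m := by
  rw [interleavedCoeff, if_neg (by omega), show (2 * m + 1) / 2 = m by omega]

theorem eval_mul_add_eval_mul_eq_sum_interleavedCoeff (p q : R[X]) (a b w : R) {N : ℕ}
    (h : ∀ i, N ≤ i → interleavedCoeff p q i = 0) :
    p.eval w * a + q.eval w * b =
      ∑ i ∈ range N, w ^ (i / 2) * (if i % 2 = 0 then a else b) * interleavedCoeff p q i := by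
  have hp : p.natDegree < N + 1 := Nat.lt_succ_of_le <|
    natDegree_le_iff_coeff_eq_zero.mpr fun m hm => by simpa using h (2 * m) (by omega)
  have hq : q.natDegree < N + 1 := Nat.lt_succ_of_le <|
    natDegree_le_iff_coeff_eq_zero.mpr fun m hm => by simpa using h (2 * m + 1) (by omega)
  have hextend : ∑ i ∈ range N, w ^ (i / 2) * (if i % 2 = 0 then a else b) *
      interleavedCoeff p q i = ∑ i ∈ range (2 * (N + 1)), w ^ (i / 2) *
      (if i % 2 = 0 then a else b) * interleavedCoeff p q i := by
    refine sum_subset (range_subset_range.mpr (by omega)) fun i _ hi => ?_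
    rw [h i (by simpa using hi), mul_zero]
  rw [hextend, sum_range_two_mul, eval_eq_sum_range' hp, eval_eq_sum_range' hq, sum_mul, sum_mul]
  congr 1 <;> refine sum_congr rfl fun m _ => ?_
  · rw [Nat.mul_div_cancel_left m two_pos, if_pos (Nat.mul_mod_right 2 m),
      interleavedCoeff_two_mul]
    ring
  · rw [show (2 * m + 1) / 2 = m by omega, if_neg (by omega), interleavedCoeff_two_mul_add_one]
    ring

end Interleave

/-- `(p_j, q_j)` with `f⁽ʲ⁾ = p_j f + q_j f'` for every solution of `f'' = z f`. -/
noncomputable def airyPoly : ℕ → ℂ[X] × ℂ[X]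
  | 0 => (1, 0)
  | j + 1 => (derivative (airyPoly j).1 + X * (airyPoly j).2,
      (airyPoly j).1 + derivative (airyPoly j).2)

/-- Entry `(i, j)` of the change of basis: the coefficient of `z^⌊i/2⌋ f` (`i` even) or
`z^⌊i/2⌋ f'` (`i` odd) in `f⁽ʲ⁾`. -/
noncomputable def airyCoeff (j : ℕ) : ℕ → ℂ :=
  interleavedCoeff (airyPoly j).1 (airyPoly j).2

theorem airyCoeff_zero_zero : airyCoeff 0 0 = 1 := by
  simp [airyCoeff, interleavedCoeff, airyPoly]

theorem airyCoeff_zero_succ (i : ℕ) : airyCoeff 0 (i + 1) = 0 := by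
  obtain ⟨m, hm | hm⟩ := Nat.even_or_odd' (i + 1) <;> rw [airyCoeff, hm]
  · rw [interleavedCoeff_two_mul, airyPoly, coeff_one, if_neg (by omega)]
  · rw [interleavedCoeff_two_mul_add_one, airyPoly, coeff_zero]

/-- On coefficients, this is `(z^m f)' = m z^(m-1) f + z^m f'` and
`(z^m f')' = m z^(m-1) f' + z^(m+1) f`. -/
theorem airyCoeff_succ_succ (j i : ℕ) :
    airyCoeff (j + 1) (i + 1) = airyCoeff j i + ((i + 3) / 2 : ℕ) * airyCoeff j (i + 3) := by
  obtain ⟨m, rfl | rfl⟩ := Nat.even_or_odd' i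
  · rw [show (2 * m + 3) / 2 = m + 1 by omega, show 2 * m + 3 = 2 * (m + 1) + 1 by ring]
    simp only [airyCoeff, airyPoly, interleavedCoeff_two_mul, interleavedCoeff_two_mul_add_one,
      coeff_add, coeff_derivative]
    push_cast
    ring
  · rw [show (2 * m + 1 + 3) / 2 = m + 2 by omega, show 2 * m + 1 + 3 = 2 * (m + 2) by ring,
      show 2 * m + 1 + 1 = 2 * (m + 1) by ring]
    simp only [airyCoeff, airyPoly, interleavedCoeff_two_mul, interleavedCoeff_two_mul_add_one,
      coeff_add, coeff_derivative, coeff_X_mul]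
    push_cast
    ring

theorem airyCoeff_eq_zero_of_lt {j i : ℕ} (h : j < i) : airyCoeff j i = 0 := by
  induction j generalizing i with
  | zero =>
    obtain ⟨i, rfl⟩ := Nat.exists_eq_add_of_lt h
    simpa using airyCoeff_zero_succ i
  | succ j ih =>
    obtain ⟨i, rfl⟩ := Nat.exists_eq_add_of_le' (Nat.one_le_of_lt h)
    rw [airyCoeff_succ_succ, ih (by omega), ih (by omega), mul_zero, add_zero]

theorem airyCoeff_self (j : ℕ) : airyCoeff j j = 1 := by
  induction j with
  | zero => exact airyCoeff_zero_zero
  | succ j ih =>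
    rw [airyCoeff_succ_succ, ih, airyCoeff_eq_zero_of_lt (by omega), mul_zero, add_zero]

theorem det_airyCoeff (n : ℕ) : (Matrix.of fun i j : Fin n => airyCoeff j i).det = 1 := by
  refine (Matrix.det_of_isUpperTriangular fun i j (hji : j < i) => ?_).trans
    (prod_eq_one fun i _ => airyCoeff_self i)
  exact airyCoeff_eq_zero_of_lt hji

section AiryEquation

variable {f : ℂ → ℂ} (hf : Differentiable ℂ f) (hODE : ∀ w, iteratedDeriv 2 f w = w * f w)
include hf hODE

theorem iteratedDeriv_eq_airyPoly (j : ℕ) (w : ℂ) :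
    iteratedDeriv j f w = (airyPoly j).1.eval w * f w + (airyPoly j).2.eval w * deriv f w := by
  have hf'' : ∀ v, deriv (deriv f) v = v * f v := fun v => by
    simpa [iteratedDeriv_succ, iteratedDeriv_one] using hODE v
  induction j generalizing w with
  | zero => simp [airyPoly]
  | succ j ih =>
    have hderiv : HasDerivAt
        (fun v => (airyPoly j).1.eval v * f v + (airyPoly j).2.eval v * deriv f v) _ w :=
      (((airyPoly j).1.hasDerivAt w).mul (hf w).hasDerivAt).add
        (((airyPoly j).2.hasDerivAt w).mul (hf.deriv w).hasDerivAt)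
    rw [iteratedDeriv_succ, funext ih, hderiv.deriv, hf'' w]
    simp only [airyPoly, eval_add, eval_mul, eval_X]
    ring

theorem iteratedDeriv_eq_sum_airyCoeff {j N : ℕ} (hj : j < N) (w : ℂ) :
    iteratedDeriv j f w =
      ∑ i ∈ range N, w ^ (i / 2) * (if i % 2 = 0 then f w else deriv f w) * airyCoeff j i := by
  rw [iteratedDeriv_eq_airyPoly hf hODE]
  exact eval_mul_add_eval_mul_eq_sum_interleavedCoeff _ _ _ _ _
    fun i hi => airyCoeff_eq_zero_of_lt (by omega)

end AiryEquation

/-- Column reduction using the Airy ODE: if each `f_k` solves `f'' (z) = z f(z)`, then the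
matrix with `(k,j)`-entry `z_k^{⌊(j−1)/2⌋} f_k(z_k)` (`j` odd) or
`z_k^{⌊(j−1)/2⌋} f_k'(z_k)` (`j` even) has, up to sign, the same determinant as the
Wronskian-type matrix `[f_k^{(j−1)}(z_k)]`. -/
theorem airy_column_reduction (n : ℕ) (f : Fin n → ℂ → ℂ) (z : Fin n → ℂ)
    (hdiff : ∀ k, Differentiable ℂ (f k))
    (hODE : ∀ k (w : ℂ), iteratedDeriv 2 (f k) w = w * f k w) :
    Matrix.det (Matrix.of fun k j : Fin n =>
        z k ^ ((j : ℕ) / 2) * (if (j : ℕ) % 2 = 0 then f k (z k) else deriv (f k) (z k)))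
      = Matrix.det (Matrix.of fun k j : Fin n => iteratedDeriv (j : ℕ) (f k) (z k))
    ∨ Matrix.det (Matrix.of fun k j : Fin n =>
        z k ^ ((j : ℕ) / 2) * (if (j : ℕ) % 2 = 0 then f k (z k) else deriv (f k) (z k)))
      = -Matrix.det (Matrix.of fun k j : Fin n => iteratedDeriv (j : ℕ) (f k) (z k)) := by
  left
  have hW : (Matrix.of fun k j : Fin n => iteratedDeriv (j : ℕ) (f k) (z k)) =
      (Matrix.of fun k j : Fin n =>
        z k ^ ((j : ℕ) / 2) * (if (j : ℕ) % 2 = 0 then f k (z k) else deriv (f k) (z k))) *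
      Matrix.of fun i j : Fin n => airyCoeff j i := by
    ext k j
    rw [Matrix.mul_apply, Matrix.of_apply,
      iteratedDeriv_eq_sum_airyCoeff (hdiff k) (hODE k) j.isLt, ← Fin.sum_univ_eq_sum_range]
    rfl
  rw [hW, Matrix.det_mul, det_airyCoeff, mul_one]
end
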